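/- Let Γ be a reflexive locally-finite relation on V and v, w ∈ V. If w ∈ K_v and v ∉ Γ(K_w), then K_w ⊆ K_v. -/

import Mathlib

/-! Submodularity of the boundary: |∂(A ∪ B)| + |∂(A ∩ B)| ≤ |∂A| + |∂B|. With A = K_v and
B = K_w, the hypothesis v ∉ Γ(K_w) makes K_v ∪ K_w a v-Moser set, and w ∈ K_v makes K_v ∩ K_w a
w-Moser set. Both boundaries are then at least μ(v) and μ(w), so submodularity forces
K_v ∩ K_w to be a w-molecule, which contains the minimal one K_w. -/

open Set Pointwise

variable {V : Type*}

/-- Image of a set under the relation. -/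
def img (Γ : V → Set V) (F : Set V) : Set V := ⋃ x ∈ F, Γ x
/-- Reverse relation. -/
def rev (Γ : V → Set V) : V → Set V := fun y => {x | y ∈ Γ x}
/-- Boundary ∂(F) = Γ(F) \ F. -/
def bd (Γ : V → Set V) (F : Set V) : Set V := img Γ F \ F
/-- ∇(F) = V \ (F ∪ Γ(F)). -/
def nab (Γ : V → Set V) (F : Set V) : Set V := (F ∪ img Γ F)ᶜ
/-- Reflexive relation. -/
def Refl (Γ : V → Set V) : Prop := ∀ x, x ∈ Γ x
/-- Locally finite relation. -/
def LocFin (Γ : V → Set V) : Prop := ∀ x, (Γ x).Finite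
/-- Automorphism of the relation. -/
def IsAuto (Γ : V → Set V) (φ : V ≃ V) : Prop := ∀ x, Γ (φ x) = φ '' Γ x
/-- Vertex-transitivity. -/
def VT (Γ : V → Set V) : Prop := ∀ x y : V, ∃ φ : V ≃ V, IsAuto Γ φ ∧ φ x = y
/-- A finite v-Moser set. -/
def MoserSet (Γ : V → Set V) (v : V) (F : Set V) : Prop :=
  F.Finite ∧ v ∈ F ∧ rev Γ v ∩ F = {v}
/-- μ(v): minimum boundary size over v-Moser sets. -/
noncomputable def mu (Γ : V → Set V) (v : V) : ℕ :=
  sInf {n | ∃ F, MoserSet Γ v F ∧ (bd Γ F).ncard = n}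
/-- A v-molecule: Moser set of minimum boundary. -/
def Molecule (Γ : V → Set V) (v : V) (F : Set V) : Prop :=
  MoserSet Γ v F ∧ (bd Γ F).ncard = mu Γ v
/-- The v-kernel: the unique minimal v-molecule. -/
def IsKernel (Γ : V → Set V) (v : V) (K : Set V) : Prop :=
  Molecule Γ v K ∧ ∀ F, Molecule Γ v F → K ⊆ F
/-- Weak connectivity κ₀. -/
noncomputable def kappa0 (Γ : V → Set V) : ℕ :=
  sInf {n | ∃ X : Set V, X.Finite ∧ X.Nonempty ∧ (bd Γ X).ncard = n}
/-- Weak fragment. -/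
def WeakFragment (Γ : V → Set V) (X : Set V) : Prop :=
  X.Finite ∧ X.Nonempty ∧ (bd Γ X).ncard = kappa0 Γ
/-- Weak atom: a weak fragment of minimum cardinality. -/
def WeakAtom (Γ : V → Set V) (X : Set V) : Prop :=
  WeakFragment Γ X ∧ ∀ Y, WeakFragment Γ Y → X.ncard ≤ Y.ncard

lemma img_union (Γ : V → Set V) (A B : Set V) : img Γ (A ∪ B) = img Γ A ∪ img Γ B :=
  biUnion_union A B Γ

lemma img_mono (Γ : V → Set V) {A B : Set V} (h : A ⊆ B) : img Γ A ⊆ img Γ B :=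
  biUnion_subset_biUnion_left h

lemma bd_finite {Γ : V → Set V} (hlf : LocFin Γ) {A : Set V} (hA : A.Finite) :
    (bd Γ A).Finite :=
  (hA.biUnion fun x _ => hlf x).sdiff

lemma bd_union_union_bd_inter_subset (Γ : V → Set V) (A B : Set V) :
    bd Γ (A ∪ B) ∪ bd Γ (A ∩ B) ⊆ bd Γ A ∪ bd Γ B := by
  rintro x (⟨hx, hxAB⟩ | ⟨hx, hxAB⟩)
  · rw [img_union] at hx
    rcases hx with hx | hx
    · exact Or.inl ⟨hx, fun hxA => hxAB (Or.inl hxA)⟩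
    · exact Or.inr ⟨hx, fun hxB => hxAB (Or.inr hxB)⟩
  · by_cases hxA : x ∈ A
    · exact Or.inr ⟨img_mono Γ inter_subset_right hx, fun hxB => hxAB ⟨hxA, hxB⟩⟩
    · exact Or.inl ⟨img_mono Γ inter_subset_left hx, hxA⟩

lemma bd_union_inter_bd_inter_subset (Γ : V → Set V) (A B : Set V) :
    bd Γ (A ∪ B) ∩ bd Γ (A ∩ B) ⊆ bd Γ A ∩ bd Γ B := by
  rintro x ⟨⟨-, hxAB⟩, hx, -⟩
  exact ⟨⟨img_mono Γ inter_subset_left hx, fun hxA => hxAB (Or.inl hxA)⟩,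
    ⟨img_mono Γ inter_subset_right hx, fun hxB => hxAB (Or.inr hxB)⟩⟩

lemma ncard_bd_union_add_ncard_bd_inter_le {Γ : V → Set V} (hlf : LocFin Γ) {A B : Set V}
    (hA : A.Finite) (hB : B.Finite) :
    (bd Γ (A ∪ B)).ncard + (bd Γ (A ∩ B)).ncard ≤ (bd Γ A).ncard + (bd Γ B).ncard := by
  have hbdA := bd_finite hlf hA
  have hbdB := bd_finite hlf hB
  calc (bd Γ (A ∪ B)).ncard + (bd Γ (A ∩ B)).ncard
      = (bd Γ (A ∪ B) ∪ bd Γ (A ∩ B)).ncard + (bd Γ (A ∪ B) ∩ bd Γ (A ∩ B)).ncard :=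
        (ncard_union_add_ncard_inter _ _ (bd_finite hlf (hA.union hB))
          (bd_finite hlf (hA.inter_of_left B))).symm
    _ ≤ (bd Γ A ∪ bd Γ B).ncard + (bd Γ A ∩ bd Γ B).ncard :=
        add_le_add (ncard_le_ncard (bd_union_union_bd_inter_subset Γ A B) (hbdA.union hbdB))
          (ncard_le_ncard (bd_union_inter_bd_inter_subset Γ A B) (hbdA.inter_of_left _))
    _ = (bd Γ A).ncard + (bd Γ B).ncard := ncard_union_add_ncard_inter _ _ hbdA hbdB

lemma MoserSet.union {Γ : V → Set V} {v : V} {A B : Set V} (hA : MoserSet Γ v A)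
    (hB : B.Finite) (hv : v ∉ img Γ B) : MoserSet Γ v (A ∪ B) := by
  obtain ⟨hAfin, hvA, hrevA⟩ := hA
  have hrevB : rev Γ v ∩ B = ∅ :=
    eq_empty_of_forall_notMem fun x ⟨hxv, hxB⟩ => hv (mem_biUnion hxB hxv)
  exact ⟨hAfin.union hB, Or.inl hvA, by rw [inter_union_distrib_left, hrevA, hrevB, union_empty]⟩

lemma MoserSet.inter {Γ : V → Set V} {w : V} {A B : Set V} (hB : MoserSet Γ w B)
    (hwA : w ∈ A) : MoserSet Γ w (A ∩ B) := by
  obtain ⟨hBfin, hwB, hrevB⟩ := hB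
  refine ⟨hBfin.inter_of_right A, ⟨hwA, hwB⟩, ?_⟩
  rw [inter_left_comm, hrevB, inter_eq_right, singleton_subset_iff]
  exact hwA

lemma mu_le_ncard_bd {Γ : V → Set V} {v : V} {F : Set V} (hF : MoserSet Γ v F) :
    mu Γ v ≤ (bd Γ F).ncard :=
  Nat.sInf_le ⟨F, hF, rfl⟩

lemma Molecule.inter {Γ : V → Set V} (hlf : LocFin Γ) {v w : V} {A B : Set V}
    (hA : Molecule Γ v A) (hB : Molecule Γ w B) (hwA : w ∈ A) (hv : v ∉ img Γ B) :
    Molecule Γ w (A ∩ B) := by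
  have hunion := mu_le_ncard_bd (hA.1.union hB.1.1 hv)
  have hinter := mu_le_ncard_bd (hB.1.inter hwA)
  have hsubmod := ncard_bd_union_add_ncard_bd_inter_le hlf hA.1.1 hB.1.1
  rw [hA.2, hB.2] at hsubmod
  exact ⟨hB.1.inter hwA, by omega⟩

theorem stmt7_general {V : Type*} (Γ : V → Set V) (hlf : LocFin Γ)
    (v w : V) (Kv Kw : Set V) (hKv : IsKernel Γ v Kv) (hKw : IsKernel Γ w Kw)
    (hw : w ∈ Kv) (hv : v ∉ img Γ Kw) : Kw ⊆ Kv :=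
  fun _ hx => (hKw.2 _ (hKv.1.inter hlf hKw.1 hw hv) hx).1

/-- If w ∈ K_v and v ∉ Γ(K_w) then K_w ⊆ K_v. -/
theorem stmt7 {V : Type*} (Γ : V → Set V) (hr : Refl Γ) (hlf : LocFin Γ)
    (v w : V) (Kv Kw : Set V) (hKv : IsKernel Γ v Kv) (hKw : IsKernel Γ w Kw)
    (hw : w ∈ Kv) (hv : v ∉ img Γ Kw) : Kw ⊆ Kv :=
  stmt7_general Γ hlf v w Kv Kw hKv hKw hw hv
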